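/- arXiv:2603.22909 — 6 statements merged into one kernel-verified Lean document; each statement's English description precedes it below -/
import Mathlib

section
/- Certificate of optimality bound: Let G be a graph and ℓ : V → ℕ a labeling such that for every edge uv of G, either ℓ(u) = 1 or ℓ(v) = 1, or ℓ(u) = ℓ(v) = i for some i ≥ 2. Let n_i denote the number of vertices with label i. Then every matching M of G satisfies |M| ≤ n_1 + Σ_{i ≥ 2} ⌊n_i / 2⌋. -/
open SimpleGraph

variable {V : Type*}

def IsMatchingSet (G : SimpleGraph V) (M : Set (Sym2 V)) : Prop :=
  M ⊆ G.edgeSet ∧ ∀ v : V, {e | e ∈ M ∧ v ∈ e}.Subsingleton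

theorem certificate_of_optimality [Fintype V] [DecidableEq V] (G : SimpleGraph V)
    (ℓ : V → ℕ)
    (hℓ : ∀ u v : V, G.Adj u v → ℓ u = 1 ∨ ℓ v = 1 ∨ (ℓ u = ℓ v ∧ 2 ≤ ℓ u))
    (M : Finset (Sym2 V)) (hM : IsMatchingSet G ↑M) :
    M.card ≤ (Finset.univ.filter (fun v => ℓ v = 1)).card +
      ∑ i ∈ (Finset.univ.image ℓ).filter (fun i => 2 ≤ i),
        (Finset.univ.filter (fun v => ℓ v = i)).card / 2 := by
  classical
  obtain ⟨hsub, hmat⟩ := hM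
  set T := (Finset.univ.image ℓ).filter (fun i => 2 ≤ i) with hT
  set S1 := M.filter (fun e => ∃ v ∈ e, ℓ v = 1) with hS1
  set Si : ℕ → Finset (Sym2 V) := fun i => M.filter (fun e => ∀ v ∈ e, ℓ v = i) with hSi
  have hcover : M ⊆ S1 ∪ T.biUnion Si := by
    intro e he
    induction e using Sym2.ind with
    | _ u v =>
      have hadj : G.Adj u v := hsub he
      rcases hℓ u v hadj with h1 | h1 | ⟨heq, h2⟩
      · exact Finset.mem_union_left _ (Finset.mem_filter.2 ⟨he, u, Sym2.mem_mk_left _ _, h1⟩)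
      · exact Finset.mem_union_left _ (Finset.mem_filter.2 ⟨he, v, Sym2.mem_mk_right _ _, h1⟩)
      · refine Finset.mem_union_right _ (Finset.mem_biUnion.2 ⟨ℓ u, ?_, ?_⟩)
        · exact Finset.mem_filter.2 ⟨Finset.mem_image_of_mem _ (Finset.mem_univ u), h2⟩
        · refine Finset.mem_filter.2 ⟨he, ?_⟩
          intro w hw
          rcases Sym2.mem_iff.1 hw with rfl | rfl
          · rfl
          · exact heq.symm
  have h1card : S1.card ≤ (Finset.univ.filter (fun v => ℓ v = 1)).card := by
    have hne : ∀ e ∈ S1, ∃ v, v ∈ e ∧ ℓ v = 1 := by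
      intro e he
      obtain ⟨v, hv, hv1⟩ := (Finset.mem_filter.1 he).2
      exact ⟨v, hv, hv1⟩
    refine Finset.card_le_card_of_injOn
      (fun e => if h : ∃ v, v ∈ e ∧ ℓ v = 1 then h.choose else e.out.1) ?_ ?_
    · intro e he
      have h := hne e he
      simp only [dif_pos h]
      exact Finset.mem_filter.2 ⟨Finset.mem_univ _, h.choose_spec.2⟩
    · intro e1 he1 e2 he2 heq
      have h1 := hne e1 he1
      have h2 := hne e2 he2
      simp only [dif_pos h1, dif_pos h2] at heq
      have hv1 := h1.choose_spec.1
      have hv2 := h2.choose_spec.1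
      rw [heq] at hv1
      exact hmat h2.choose ⟨(Finset.mem_filter.1 he1).1, hv1⟩
        ⟨(Finset.mem_filter.1 he2).1, hv2⟩
  have hicard : ∀ i ∈ T, (Si i).card ≤ (Finset.univ.filter (fun v => ℓ v = i)).card / 2 := by
    intro i hi
    rw [Nat.le_div_iff_mul_le (by norm_num)]
    have hdisj : ∀ e1 ∈ Si i, ∀ e2 ∈ Si i, e1 ≠ e2 →
        Disjoint (Finset.univ.filter (· ∈ e1)) (Finset.univ.filter (· ∈ e2)) := by
      intro e1 he1 e2 he2 hne
      rw [Finset.disjoint_left]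
      intro v hv1 hv2
      exact hne (hmat v ⟨(Finset.mem_filter.1 he1).1, (Finset.mem_filter.1 hv1).2⟩
        ⟨(Finset.mem_filter.1 he2).1, (Finset.mem_filter.1 hv2).2⟩)
    have hbi : (Si i).biUnion (fun e => Finset.univ.filter (· ∈ e)) ⊆
        Finset.univ.filter (fun v => ℓ v = i) := by
      intro v hv
      obtain ⟨e, he, hve⟩ := Finset.mem_biUnion.1 hv
      exact Finset.mem_filter.2 ⟨Finset.mem_univ _,
        (Finset.mem_filter.1 he).2 v (Finset.mem_filter.1 hve).2⟩
    calc (Si i).card * 2 = ∑ e ∈ Si i, (Finset.univ.filter (· ∈ e)).card := by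
          rw [Finset.sum_congr rfl, Finset.sum_const, smul_eq_mul]
          intro e he
          have hee : e ∈ G.edgeSet := hsub (Finset.mem_filter.1 he).1
          induction e using Sym2.ind with
          | _ u v =>
            have huv : u ≠ v := G.ne_of_adj hee
            have : Finset.univ.filter (· ∈ s(u, v)) = {u, v} := by
              ext w; simp [Sym2.mem_iff]
            rw [this, Finset.card_insert_of_notMem (by simp [huv]), Finset.card_singleton]
      _ = ((Si i).biUnion (fun e => Finset.univ.filter (· ∈ e))).card :=
          (Finset.card_biUnion hdisj).symm
      _ ≤ _ := Finset.card_le_card hbi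
  calc M.card ≤ (S1 ∪ T.biUnion Si).card := Finset.card_le_card hcover
    _ ≤ S1.card + (T.biUnion Si).card := Finset.card_union_le _ _
    _ ≤ S1.card + ∑ i ∈ T, (Si i).card := by
        exact Nat.add_le_add_left (Finset.card_biUnion_le) _
    _ ≤ _ := Nat.add_le_add h1card (Finset.sum_le_sum hicard)
end

section
/- Augmenting path from two trees: suppose P is an even-length alternating path from free vertex f₁ to vertex u, Q is an even-length alternating path from free vertex f₂ to vertex v, f₁ ≠ f₂, P and Q are vertex-disjoint, and uv is a non-matching edge. Then the concatenation P · uv · reverse(Q) is an augmenting path with respect to M of length |P| + |Q| + 1. -/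
open SimpleGraph

variable {V : Type*}

/-- A vertex is free (unmatched) if no matching edge contains it. -/
def Unmatched (M : Set (Sym2 V)) (v : V) : Prop :=
  ∀ e ∈ M, v ∉ e

/-- A walk is alternating w.r.t. `M` if its edges alternate non-matching /
matching, starting with a non-matching edge. -/
def IsAlternating (G : SimpleGraph V) (M : Set (Sym2 V)) {u v : V} (p : G.Walk u v) : Prop :=
  ∀ (i : ℕ) (h : i < p.edges.length), (p.edges.get ⟨i, h⟩ ∈ M ↔ Odd i)

/-- An `M`-augmenting path: a simple path of odd length, alternating starting
(and hence ending) with non-matching edges, whose two endpoints are free. -/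
def IsAugPath (G : SimpleGraph V) (M : Set (Sym2 V)) {u v : V} (p : G.Walk u v) : Prop :=
  p.IsPath ∧ Odd p.length ∧ IsAlternating G M p ∧ Unmatched M u ∧ Unmatched M v

/-- Length of a shortest even-length alternating simple path from a free vertex to `v`. -/
noncomputable def Lcp (G : SimpleGraph V) (M : Set (Sym2 V)) (v : V) : ℕ∞ :=
  sInf {n : ℕ∞ | ∃ (f : V) (p : G.Walk f v), Unmatched M f ∧ p.IsPath ∧
    IsAlternating G M p ∧ Even p.length ∧ (p.length : ℕ∞) = n}

/-- Length of a shortest odd-length alternating simple path from a free vertex to `v`. -/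
noncomputable def LcpOdd (G : SimpleGraph V) (M : Set (Sym2 V)) (v : V) : ℕ∞ :=
  sInf {n : ℕ∞ | ∃ (f : V) (p : G.Walk f v), Unmatched M f ∧ p.IsPath ∧
    IsAlternating G M p ∧ Odd p.length ∧ (p.length : ℕ∞) = n}

/-- augmenting path from two trees: if `P` and `Q` are vertex-disjoint
even-length alternating paths from distinct free vertices `f₁`, `f₂` to `u`, `v`
respectively, and `uv` is a non-matching edge, then `P · uv · reverse Q` is an
`M`-augmenting path of length `|P| + |Q| + 1`. -/
theorem bridge_gives_augmenting_path (G : SimpleGraph V) (M : Set (Sym2 V))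
    (hM : IsMatchingSet G M) (f₁ f₂ u v : V) (hf : f₁ ≠ f₂)
    (P : G.Walk f₁ u) (Q : G.Walk f₂ v)
    (hf₁ : Unmatched M f₁) (hf₂ : Unmatched M f₂)
    (hP : P.IsPath) (hQ : Q.IsPath)
    (haltP : IsAlternating G M P) (haltQ : IsAlternating G M Q)
    (hevP : Even P.length) (hevQ : Even Q.length)
    (hdisj : ∀ x ∈ P.support, x ∉ Q.support)
    (huv : G.Adj u v) (hnm : s(u, v) ∉ M) :
    IsAugPath G M (P.append (SimpleGraph.Walk.cons huv Q.reverse)) ∧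
      (P.append (SimpleGraph.Walk.cons huv Q.reverse)).length = P.length + Q.length + 1 := by
  classical
  set W := P.append (SimpleGraph.Walk.cons huv Q.reverse) with hW
  have hlen : W.length = P.length + Q.length + 1 := by
    simp [hW, Walk.length_append, Walk.length_cons, Walk.length_reverse]
    omega
  have hedges : W.edges = P.edges ++ (s(u, v) :: Q.edges.reverse) := by
    simp [hW, Walk.edges_append, Walk.edges_cons, Walk.edges_reverse]
  have hPlen : P.edges.length = P.length := Walk.length_edges P
  have hQlen : Q.edges.length = Q.length := Walk.length_edges Q
  have hpath : W.IsPath := by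
    rw [Walk.isPath_def, hW, Walk.support_append]
    simp only [Walk.support_cons, List.tail_cons]
    apply List.Nodup.append hP.support_nodup
    · rw [Walk.support_reverse]
      exact List.nodup_reverse.mpr hQ.support_nodup
    · intro x hx hx'
      rw [Walk.support_reverse, List.mem_reverse] at hx'
      exact hdisj x hx hx'
  refine ⟨⟨hpath, ?_, ?_, hf₁, hf₂⟩, hlen⟩
  · rw [hlen]
    rcases hevP with ⟨a, ha⟩; rcases hevQ with ⟨b, hb⟩
    exact ⟨a + b, by omega⟩
  · intro i h
    have h' : i < P.edges.length + (Q.edges.length + 1) := by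
      have := h; rw [hedges] at this; simpa using this
    have hget : W.edges.get ⟨i, h⟩ = W.edges[i] := rfl
    rw [hget]
    rcases lt_or_ge i P.edges.length with hi | hi
    · have : W.edges[i]'h = P.edges[i] := by
        simp only [hedges]
        exact List.getElem_append_left hi
      rw [this]
      have := haltP i hi
      simpa using this
    · have heq : W.edges[i]'h = (s(u, v) :: Q.edges.reverse)[i - P.edges.length]'(by
        simp; omega) := by
        simp only [hedges]
        exact List.getElem_append_right hi
      rcases Nat.eq_or_lt_of_le hi with hi' | hi'
      · have h0 : i - P.edges.length = 0 := by omega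
        rw [heq]
        simp only [h0, List.getElem_cons_zero]
        constructor
        · intro hm; exact absurd hm hnm
        · intro ho
          exfalso
          rw [← hi', hPlen] at ho
          exact (Nat.not_odd_iff_even.mpr hevP) ho
      · have hj : i - P.edges.length - 1 < Q.edges.reverse.length := by
          simp; omega
        have heq2 : W.edges[i]'h = Q.edges.reverse[i - P.edges.length - 1]'hj := by
          rw [heq]
          rw [List.getElem_cons]
          simp only [dif_neg (by omega : ¬ i - P.edges.length = 0)]
        have hj' : Q.edges.length - 1 - (i - P.edges.length - 1) < Q.edges.length := by omega
        have heq3 : Q.edges.reverse[i - P.edges.length - 1]'hj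
            = Q.edges[Q.edges.length - 1 - (i - P.edges.length - 1)]'hj' := by
          rw [List.getElem_reverse]
        rw [heq2, heq3]
        have := haltQ (Q.edges.length - 1 - (i - P.edges.length - 1)) hj'
        simp only [List.get_eq_getElem] at this
        rw [this]
        rcases hevP with ⟨a, ha⟩; rcases hevQ with ⟨b, hb⟩
        rw [Nat.odd_iff, Nat.odd_iff]
        omega
end

section
/- Symmetric-difference parity argument: if M and N are matchings in a graph G with |N| > |M|, then the symmetric difference M △ N contains at least |N| - |M| vertex-disjoint M-augmenting paths. -/
/-!
Every vertex lies on at most two edges of `S = M △ N`. If `|M| < |N|`, counting the `2|F|`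
vertices covered by a matching `F` gives a vertex `u` on an edge of `N \ M` but on none of
`M \ N`; extending a path from `u` greedily inside `S` ends in a path that is a whole component
of `S`. It alternates, starting with an edge of `N`, so it is `M`-augmenting when its length is
odd. Removing its edges from `M` and `N` lowers `|N| - |M|` by one if the length is odd and
keeps it otherwise, and the paths found recursively in the rest of `S` avoid its vertices.
-/

open SimpleGraph

variable {V : Type*}

open Finset

lemma IsMatchingSet.mono {G : SimpleGraph V} {F F' : Set (Sym2 V)} (hF : IsMatchingSet G F)
    (h : F' ⊆ F) : IsMatchingSet G F' :=
  ⟨h.trans hF.1, fun v => (hF.2 v).anti fun _ he => ⟨h he.1, he.2⟩⟩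

section Matchings
variable {G : SimpleGraph V} [DecidableEq V] {M N F : Finset (Sym2 V)}

lemma IsMatchingSet.card_filter_mem_le_one (hF : IsMatchingSet G ↑F) (v : V) :
    #{e ∈ F | v ∈ e} ≤ 1 :=
  card_le_one.2 fun e he f hf => hF.2 v (by simpa using he) (by simpa using hf)

lemma IsMatchingSet.card_biUnion_toFinset (hF : IsMatchingSet G ↑F) :
    #(F.biUnion Sym2.toFinset) = 2 * #F := by
  rw [card_biUnion, sum_const_nat, mul_comm]
  · exact fun e he => Sym2.card_toFinset_of_not_isDiag e (G.not_isDiag_of_mem_edgeSet (hF.1 he))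
  · intro e he f hf hef
    rw [Function.onFun, Finset.disjoint_left]
    intro v hve hvf
    exact hef (hF.2 v ⟨he, Sym2.mem_toFinset.1 hve⟩ ⟨hf, Sym2.mem_toFinset.1 hvf⟩)

lemma IsMatchingSet.exists_mem_forall_notMem_of_card_lt {D E : Finset (Sym2 V)}
    (hD : IsMatchingSet G ↑D) (hE : IsMatchingSet G ↑E) (h : #D < #E) :
    ∃ u, ∃ f ∈ E, u ∈ f ∧ ∀ e ∈ D, u ∉ e := by
  obtain ⟨u, hu, hu'⟩ := exists_mem_notMem_of_card_lt_card
    (s := D.biUnion Sym2.toFinset) (t := E.biUnion Sym2.toFinset)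
    (by rw [hD.card_biUnion_toFinset, hE.card_biUnion_toFinset]; omega)
  simp only [mem_biUnion, Sym2.mem_toFinset, not_exists, not_and] at hu hu'
  obtain ⟨f, hf, huf⟩ := hu
  exact ⟨u, f, hf, huf, hu'⟩

lemma card_filter_mem_symmDiff_le_two (hM : IsMatchingSet G ↑M) (hN : IsMatchingSet G ↑N)
    (v : V) : #{e ∈ symmDiff M N | v ∈ e} ≤ 2 := by
  calc #{e ∈ symmDiff M N | v ∈ e}
      ≤ #({e ∈ M | v ∈ e} ∪ {e ∈ N | v ∈ e}) := by
        refine card_le_card fun e he => ?_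
        simp only [mem_filter, mem_union, mem_symmDiff] at he ⊢
        tauto
    _ ≤ 2 := (card_union_le _ _).trans
        (add_le_add (hM.card_filter_mem_le_one v) (hN.card_filter_mem_le_one v))

lemma coe_symmDiff_subset_edgeSet (hM : IsMatchingSet G ↑M) (hN : IsMatchingSet G ↑N) :
    ↑(symmDiff M N) ⊆ G.edgeSet := fun e he => by
  rcases mem_symmDiff.1 he with h | h
  exacts [hM.1 h.1, hN.1 h.1]

lemma exists_mem_sdiff_card_filter_symmDiff_le_one (hM : IsMatchingSet G ↑M)
    (hN : IsMatchingSet G ↑N) (h : #M < #N) :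
    ∃ u, ∃ f ∈ N \ M, u ∈ f ∧ #{e ∈ symmDiff M N | u ∈ e} ≤ 1 := by
  have hcard : #(M \ N) < #(N \ M) := by
    have := card_sdiff_add_card_inter M N
    have := card_sdiff_add_card_inter N M
    rw [inter_comm] at this
    omega
  obtain ⟨u, f, hf, huf, hu⟩ := IsMatchingSet.exists_mem_forall_notMem_of_card_lt
    (hM.mono (coe_subset.2 sdiff_subset)) (hN.mono (coe_subset.2 sdiff_subset)) hcard
  refine ⟨u, f, hf, huf, card_le_one.2 fun e he e' he' => ?_⟩
  have heq_f : ∀ e ∈ {e ∈ symmDiff M N | u ∈ e}, e = f := by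
    intro e he
    rw [mem_filter, mem_symmDiff] at he
    rcases he with ⟨⟨heM, heN⟩ | ⟨heN, -⟩, hue⟩
    · exact absurd hue (hu e (mem_sdiff.2 ⟨heM, heN⟩))
    · exact hN.2 u ⟨heN, hue⟩ ⟨(mem_sdiff.1 hf).1, huf⟩
  rw [heq_f e he, heq_f e' he']

lemma unmatched_of_card_filter_symmDiff_le_one (hN : IsMatchingSet G ↑N)
    (hv : #{e ∈ symmDiff M N | v ∈ e} ≤ 1) (hf : f ∈ N \ M) (hvf : v ∈ f) :
    Unmatched ↑M v := by
  rw [mem_sdiff] at hf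
  intro g hg hvg
  have hgf : g = f := by
    by_cases hgN : g ∈ N
    · exact hN.2 v ⟨hgN, hvg⟩ ⟨hf.1, hvf⟩
    · exact card_le_one.1 hv g (mem_filter.2 ⟨mem_symmDiff.2 (Or.inl ⟨hg, hgN⟩), hvg⟩)
        f (mem_filter.2 ⟨mem_symmDiff.2 (Or.inr hf), hvf⟩)
  exact hf.2 (hgf ▸ hg)

lemma mem_iff_notMem_of_mem_symmDiff (hM : IsMatchingSet G ↑M) (hN : IsMatchingSet G ↑N)
    {e f : Sym2 V} (he : e ∈ symmDiff M N) (hf : f ∈ symmDiff M N) (hef : e ≠ f) {v : V}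
    (hve : v ∈ e) (hvf : v ∈ f) : e ∈ M ↔ f ∉ M := by
  rw [mem_symmDiff] at he hf
  rcases he with ⟨heM, -⟩ | ⟨heN, heM⟩ <;> rcases hf with ⟨hfM, -⟩ | ⟨hfN, hfM⟩
  · exact absurd (hM.2 v ⟨heM, hve⟩ ⟨hfM, hvf⟩) hef
  · simp [heM, hfM]
  · simp [heM, hfM]
  · exact absurd (hN.2 v ⟨heN, hve⟩ ⟨hfN, hvf⟩) hef

end Matchings

lemma SimpleGraph.Walk.IsPath.eq_mk_snd_of_mem_edges {G : SimpleGraph V} {u v : V}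
    {p : G.Walk u v} (hp : p.IsPath) {e : Sym2 V} (he : e ∈ p.edges) (hue : u ∈ e) :
    e = s(u, p.snd) := by
  cases p with
  | nil => simp at he
  | cons h q =>
    rw [Walk.edges_cons, List.mem_cons] at he
    rcases he with rfl | he
    · simp
    · exact absurd (q.mem_support_of_mem_edges he hue) ((Walk.cons_isPath_iff h q).1 hp).2

lemma SimpleGraph.Walk.IsTrail.length_le_card {G : SimpleGraph V} [DecidableEq V] {u v : V}
    {p : G.Walk u v} (hp : p.IsTrail) {S : Finset (Sym2 V)} (hpS : ∀ e ∈ p.edges, e ∈ S) :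
    p.length ≤ #S := by
  rw [← p.length_edges, ← List.toFinset_card_of_nodup hp.edges_nodup]
  exact card_le_card fun e he => hpS e (List.mem_toFinset.1 he)

lemma support_disjoint_of_closed {G : SimpleGraph V} {S : Finset (Sym2 V)} {u x a b : V}
    {p : G.Walk u x} {q : G.Walk a b} (hclosed : ∀ y ∈ p.support, ∀ e ∈ S, y ∈ e → e ∈ p.edges)
    (hq : ¬q.Nil) (hqS : ∀ e ∈ q.edges, e ∈ S ∧ e ∉ p.edges) :
    q.support.Disjoint p.support := by
  intro y hyq hyp
  obtain ⟨e, he, hye⟩ := (Walk.mem_support_iff_exists_mem_edges_of_not_nil hq).1 hyq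
  exact (hqS e he).2 (hclosed y hyp e (hqS e he).1 hye)

section ClosedPath
variable {G : SimpleGraph V} [DecidableEq V] {S : Finset (Sym2 V)} {u : V}

lemma exists_cons_isPath_of_notMem_edges (hSG : ↑S ⊆ G.edgeSet)
    (hS : ∀ v, #{e ∈ S | v ∈ e} ≤ 2) (hu : #{e ∈ S | u ∈ e} ≤ 1) {x : V} {q : G.Walk x u}
    (hq : q.IsPath) (hqS : ∀ e ∈ q.edges, e ∈ S)
    (hclosed : ∀ y ∈ q.support.tail, ∀ e ∈ S, y ∈ e → e ∈ q.edges)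
    {e : Sym2 V} (he : e ∈ S) (hxe : x ∈ e) (heq : e ∉ q.edges) :
    ∃ (y : V) (q' : G.Walk y u), q'.IsPath ∧ (∀ e ∈ q'.edges, e ∈ S) ∧
      (∀ y ∈ q'.support.tail, ∀ e ∈ S, y ∈ e → e ∈ q'.edges) ∧ q'.length = q.length + 1 := by
  obtain ⟨y, rfl⟩ := Sym2.mem_iff_exists.1 hxe
  have hadj : G.Adj y x := (hSG he).symm
  have hy : y ∉ q.support := by
    rw [← q.cons_tail_support, List.mem_cons]
    rintro (rfl | hy)
    · exact hadj.ne rfl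
    · exact heq (hclosed y hy _ he (Sym2.mem_mk_right x y))
  refine ⟨y, .cons hadj q, (Walk.cons_isPath_iff hadj q).2 ⟨hq, hy⟩, ?_, ?_, rfl⟩
  · simp only [Walk.edges_cons, List.mem_cons]
    rintro g (rfl | hg)
    · rwa [Sym2.eq_swap]
    · exact hqS g hg
  · simp only [Walk.support_cons, List.tail_cons, Walk.edges_cons, List.mem_cons]
    intro z hz g hg hzg
    rw [← q.cons_tail_support, List.mem_cons] at hz
    rcases hz with rfl | hz
    · by_contra! hne
      -- `g`, `s(z, y)` and the first edge of `q` would be three distinct edges of `S` at `z`;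
      -- if `q` is nil, `z = u` and two distinct ones already contradict `hu`
      cases q with
      | nil =>
        exact hne.1 ((card_le_one.1 hu g (by simp [hg, hzg]) _ (by simp [he])).trans
          Sym2.eq_swap)
      | @cons _ w _ h q =>
        refine (hS z).not_gt (two_lt_card.2 ⟨g, by simp [hg, hzg], s(z, y), by simp [he],
          s(z, w), mem_filter.2 ⟨hqS _ (by simp), Sym2.mem_mk_left _ _⟩, ?_, ?_, ?_⟩)
        · rw [← Sym2.eq_swap]; exact hne.1
        · exact fun h' => hne.2 (h' ▸ by simp)
        · exact fun h' => heq (h' ▸ by simp)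
    · exact Or.inr (hclosed z hz g hg hzg)

lemma exists_closed_isPath_of_closed_tail (hSG : ↑S ⊆ G.edgeSet)
    (hS : ∀ v, #{e ∈ S | v ∈ e} ≤ 2) (hu : #{e ∈ S | u ∈ e} ≤ 1) {x : V} (q : G.Walk x u)
    (hq : q.IsPath) (hqS : ∀ e ∈ q.edges, e ∈ S)
    (hclosed : ∀ y ∈ q.support.tail, ∀ e ∈ S, y ∈ e → e ∈ q.edges) :
    ∃ (y : V) (p : G.Walk y u), p.IsPath ∧ (∀ e ∈ p.edges, e ∈ S) ∧
      ∀ z ∈ p.support, ∀ e ∈ S, z ∈ e → e ∈ p.edges := by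
  by_cases hext : ∀ e ∈ S, x ∈ e → e ∈ q.edges
  · refine ⟨x, q, hq, hqS, fun z hz => ?_⟩
    rw [← q.cons_tail_support, List.mem_cons] at hz
    rcases hz with rfl | hz
    · exact hext
    · exact hclosed z hz
  · push Not at hext
    obtain ⟨e, he, hxe, heq⟩ := hext
    obtain ⟨y, q', hq', hq'S, hq'closed, hlen⟩ :=
      exists_cons_isPath_of_notMem_edges hSG hS hu hq hqS hclosed he hxe heq
    have := hq'.isTrail.length_le_card hq'S
    exact exists_closed_isPath_of_closed_tail hSG hS hu q' hq' hq'S hq'closed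
termination_by #S - q.length

lemma exists_closed_isPath (hSG : ↑S ⊆ G.edgeSet) (hS : ∀ v, #{e ∈ S | v ∈ e} ≤ 2)
    (hu : #{e ∈ S | u ∈ e} ≤ 1) :
    ∃ (x : V) (p : G.Walk u x), p.IsPath ∧ (∀ e ∈ p.edges, e ∈ S) ∧
      (∀ y ∈ p.support, ∀ e ∈ S, y ∈ e → e ∈ p.edges) ∧ #{e ∈ S | x ∈ e} ≤ 1 := by
  obtain ⟨x, q, hq, hqS, hclosed⟩ := exists_closed_isPath_of_closed_tail hSG hS hu .nil
    (by simp) (by simp) (by simp)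
  refine ⟨x, q.reverse, hq.reverse, by simpa using hqS, by simpa using hclosed, ?_⟩
  refine card_le_one.2 fun e he f hf => ?_
  rw [mem_filter] at he hf
  rw [hq.eq_mk_snd_of_mem_edges (hclosed x q.start_mem_support e he.1 he.2) he.2,
    hq.eq_mk_snd_of_mem_edges (hclosed x q.start_mem_support f hf.1 hf.2) hf.2]

end ClosedPath

lemma List.Nodup.card_filter_toFinset_mem_of_parity {α : Type*} [DecidableEq α]
    {F : Finset α} {l : List α} (hl : l.Nodup) {c : ℕ}
    (h : ∀ i (hi : i < l.length), l[i] ∈ F ↔ Odd (i + c)) :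
    #{x ∈ l.toFinset | x ∈ F} = (l.length + c % 2) / 2 := by
  induction l generalizing c with
  | nil => simp
  | cons a l ih =>
    rw [List.nodup_cons] at hl
    have ha : a ∈ F ↔ Odd c := by
      have := h 0 (by simp)
      rwa [List.getElem_cons_zero, Nat.zero_add] at this
    have hrec := ih hl.2 (c := c + 1) fun i hi => by
      have := h (i + 1) (by simpa using hi)
      rwa [List.getElem_cons_succ, Nat.add_right_comm, Nat.add_assoc] at this
    rw [List.toFinset_cons, filter_insert, List.length_cons]
    split_ifs with haF
    · rw [card_insert_of_notMem (by simp [hl.1]), hrec]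
      have := Nat.odd_iff.1 (ha.1 haF)
      omega
    · rw [hrec]
      have := Nat.not_odd_iff.1 (mt ha.2 haF)
      omega

section Peeling
variable {G : SimpleGraph V} [DecidableEq V] {M N : Finset (Sym2 V)}

lemma isAlternating_of_isTrail (hM : IsMatchingSet G ↑M) (hN : IsMatchingSet G ↑N)
    {u v : V} {p : G.Walk u v} (hp : p.IsTrail) (hpS : ∀ e ∈ p.edges, e ∈ symmDiff M N)
    (hu : Unmatched ↑M u) : IsAlternating G ↑M p := by
  intro i hi
  simp only [List.get_eq_getElem, mem_coe]
  induction i with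
  | zero =>
    simp only [Nat.not_odd_zero, iff_false]
    refine fun h => hu _ h ?_
    rw [Walk.getElem_edges, Walk.getVert_zero]
    exact Sym2.mem_mk_left _ _
  | succ i ih =>
    have hne : p.edges[i] ≠ p.edges[i + 1] := fun h => by
      simpa using hp.edges_nodup.getElem_inj_iff.1 h
    have := mem_iff_notMem_of_mem_symmDiff hM hN (hpS _ (List.getElem_mem _))
      (hpS _ (List.getElem_mem hi)) hne (v := p.getVert (i + 1))
      (by rw [Walk.getElem_edges]; exact Sym2.mem_mk_right _ _)
      (by rw [Walk.getElem_edges]; exact Sym2.mem_mk_left _ _)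
    rw [Nat.odd_add_one, ← ih (by omega)]
    tauto

lemma card_inter_toFinset_edges_of_isAlternating {u v : V} {p : G.Walk u v} (hp : p.IsTrail)
    (halt : IsAlternating G ↑M p) : #(M ∩ p.edges.toFinset) = p.length / 2 := by
  rw [inter_comm, ← filter_mem_eq_inter, hp.edges_nodup.card_filter_toFinset_mem_of_parity
    (c := 0) fun i hi => halt i hi, p.length_edges, Nat.zero_mod, Nat.add_zero]

lemma card_inter_toFinset_edges_of_isAlternating_of_symmDiff {u v : V} {p : G.Walk u v}
    (hp : p.IsTrail) (hpS : ∀ e ∈ p.edges, e ∈ symmDiff M N) (halt : IsAlternating G ↑M p) :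
    #(N ∩ p.edges.toFinset) = (p.length + 1) / 2 := by
  rw [inter_comm, ← filter_mem_eq_inter, hp.edges_nodup.card_filter_toFinset_mem_of_parity
    (c := 1) fun i hi => ?_, p.length_edges]
  have := hpS _ (List.getElem_mem hi)
  rw [Nat.odd_add_one, ← halt i hi, List.get_eq_getElem, mem_coe]
  rw [mem_symmDiff] at this
  tauto

lemma IsAlternating.unmatched_end_of_odd (hN : IsMatchingSet G ↑N) {u x : V} {p : G.Walk u x}
    (hpS : ∀ e ∈ p.edges, e ∈ symmDiff M N) (halt : IsAlternating G ↑M p) (hodd : Odd p.length)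
    (hx : #{e ∈ symmDiff M N | x ∈ e} ≤ 1) : Unmatched ↑M x := by
  have hlast : p.length - 1 < p.edges.length := by
    rw [p.length_edges]
    exact Nat.sub_lt hodd.pos one_pos
  have hlastM : p.edges[p.length - 1] ∉ M := by
    have := halt (p.length - 1) hlast
    rw [List.get_eq_getElem, mem_coe] at this
    rw [this, Nat.odd_iff]
    have := Nat.odd_iff.1 hodd
    omega
  refine unmatched_of_card_filter_symmDiff_le_one hN hx (mem_sdiff.2 ⟨?_, hlastM⟩) ?_
  · have := hpS _ (List.getElem_mem hlast)
    rw [mem_symmDiff] at this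
    tauto
  · rw [Walk.getElem_edges, Nat.sub_add_cancel hodd.pos, Walk.getVert_length]
    exact Sym2.mem_mk_right _ _

lemma IsAugPath.of_sdiff {P : Finset (Sym2 V)} {a b : V} {q : G.Walk a b}
    (hq : IsAugPath G ↑(M \ P) q) (hP : ∀ e ∈ P, ∀ y ∈ e, y ∉ q.support) :
    IsAugPath G ↑M q := by
  obtain ⟨hpath, hodd, halt, ha, hb⟩ := hq
  have hqP : ∀ e ∈ q.edges, e ∉ P := fun e he heP =>
    hP e heP _ (Sym2.out_fst_mem e) (q.mem_support_of_mem_edges he (Sym2.out_fst_mem e))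
  have hend : ∀ y ∈ q.support, Unmatched ↑(M \ P) y → Unmatched ↑M y := by
    intro y hy hyM e he hye
    by_cases heP : e ∈ P
    · exact hP e heP y hye hy
    · exact hyM e (by simp [mem_coe.1 he, heP]) hye
  refine ⟨hpath, hodd, fun i hi => ?_, hend a q.start_mem_support ha, hend b q.end_mem_support hb⟩
  rw [← halt i hi, mem_coe, mem_coe, mem_sdiff, and_iff_left (hqP _ (List.get_mem _ _))]

lemma IsAugPath.of_sdiff_edges_of_closed {u x a b : V} {p : G.Walk u x}
    (hclosed : ∀ y ∈ p.support, ∀ e ∈ symmDiff M N, y ∈ e → e ∈ p.edges) {q : G.Walk a b}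
    (hq : IsAugPath G ↑(M \ p.edges.toFinset) q)
    (hqS : ∀ e ∈ q.edges, e ∈ symmDiff (M \ p.edges.toFinset) (N \ p.edges.toFinset)) :
    (IsAugPath G ↑M q ∧ ∀ e ∈ q.edges, e ∈ symmDiff M N) ∧ q.support.Disjoint p.support := by
  have hqS' : ∀ e ∈ q.edges, e ∈ symmDiff M N ∧ e ∉ p.edges := fun e he => by
    have := hqS e he
    simp only [mem_symmDiff, mem_sdiff, List.mem_toFinset] at this ⊢
    tauto
  have hqp : q.support.Disjoint p.support :=
    support_disjoint_of_closed hclosed (Walk.not_nil_iff_lt_length.2 hq.2.1.pos) hqS'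
  refine ⟨⟨hq.of_sdiff fun e he y hye hyq => hqp hyq ?_, fun e he => (hqS' e he).1⟩, hqp⟩
  exact p.mem_support_of_mem_edges (List.mem_toFinset.1 he) hye

end Peeling

theorem exists_list_augPath_pairwise_disjoint {G : SimpleGraph V} [DecidableEq V]
    {M N : Finset (Sym2 V)} (hM : IsMatchingSet G ↑M) (hN : IsMatchingSet G ↑N) :
    ∃ L : List (Σ (u : V) (v : V), G.Walk u v), #N - #M ≤ L.length ∧
      (∀ w ∈ L, IsAugPath G ↑M w.2.2 ∧ ∀ e ∈ w.2.2.edges, e ∈ symmDiff M N) ∧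
      L.Pairwise fun w w' => w.2.2.support.Disjoint w'.2.2.support := by
  by_cases hMN : #N ≤ #M
  · exact ⟨[], by simp [hMN], by simp, .nil⟩
  obtain ⟨u, f, hf, huf, hu⟩ := exists_mem_sdiff_card_filter_symmDiff_le_one hM hN (by omega)
  obtain ⟨x, p, hp, hpS, hclosed, hx⟩ := exists_closed_isPath
    (coe_symmDiff_subset_edgeSet hM hN) (card_filter_mem_symmDiff_le_two hM hN) hu
  have huM : Unmatched ↑M u := unmatched_of_card_filter_symmDiff_le_one hN hu hf huf
  have halt := isAlternating_of_isTrail hM hN hp.isTrail hpS huM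
  have hlen : 0 < p.length := by
    rw [← p.length_edges]
    exact List.length_pos_of_mem <| hclosed u p.start_mem_support f
      (mem_symmDiff.2 (Or.inr (mem_sdiff.1 hf))) huf
  have hM' : #(M \ p.edges.toFinset) + p.length / 2 = #M := by
    rw [← card_inter_toFinset_edges_of_isAlternating hp.isTrail halt, card_sdiff_add_card_inter]
  have hN' : #(N \ p.edges.toFinset) + (p.length + 1) / 2 = #N := by
    rw [← card_inter_toFinset_edges_of_isAlternating_of_symmDiff hp.isTrail hpS halt,
      card_sdiff_add_card_inter]
  obtain ⟨L, hL, haug, hdisj⟩ := exists_list_augPath_pairwise_disjoint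
    (M := M \ p.edges.toFinset) (N := N \ p.edges.toFinset)
    (hM.mono (coe_subset.2 sdiff_subset)) (hN.mono (coe_subset.2 sdiff_subset))
  have hlift := fun w hw => IsAugPath.of_sdiff_edges_of_closed hclosed (haug w hw).1 (haug w hw).2
  rcases Nat.even_or_odd p.length with heven | hodd
  · refine ⟨L, ?_, fun w hw => (hlift w hw).1, hdisj⟩
    have := Nat.even_iff.1 heven
    omega
  · refine ⟨⟨u, x, p⟩ :: L, ?_, ?_,
      List.pairwise_cons.2 ⟨fun w hw => (hlift w hw).2.symm, hdisj⟩⟩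
    · have := Nat.odd_iff.1 hodd
      rw [List.length_cons]
      omega
    · simp only [List.mem_cons, forall_eq_or_imp]
      exact ⟨⟨⟨hp, hodd, halt, huM, halt.unmatched_end_of_odd hN hpS hodd hx⟩, hpS⟩,
        fun w hw => (hlift w hw).1⟩
termination_by #N
decreasing_by omega

theorem symmDiff_augmenting_paths_general [DecidableEq V] (G : SimpleGraph V)
    (M N : Finset (Sym2 V)) (hM : IsMatchingSet G ↑M) (hN : IsMatchingSet G ↑N) :
    ∃ P : Fin (N.card - M.card) → Σ (u : V) (v : V), G.Walk u v,
      (∀ i, IsAugPath G ↑M (P i).2.2) ∧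
      (∀ i, ∀ e ∈ (P i).2.2.edges, e ∈ symmDiff M N) ∧
      (∀ i j, i ≠ j → ∀ x ∈ (P i).2.2.support, x ∉ (P j).2.2.support) := by
  obtain ⟨L, hlen, hL, hdisj⟩ := exists_list_augPath_pairwise_disjoint hM hN
  refine ⟨fun i => L[i.1], fun i => (hL _ (List.getElem_mem _)).1,
    fun i => (hL _ (List.getElem_mem _)).2, fun i j hij x hi hj => ?_⟩
  rcases Nat.lt_or_gt_of_ne (Fin.val_ne_of_ne hij) with h | h
  · exact List.pairwise_iff_getElem.1 hdisj i j _ _ h hi hj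
  · exact List.pairwise_iff_getElem.1 hdisj j i _ _ h hj hi

/-- if `M` and `N` are matchings with `|N| > |M|`, then `M △ N` contains
at least `|N| - |M|` vertex-disjoint `M`-augmenting paths. -/
theorem symmDiff_augmenting_paths [Fintype V] [DecidableEq V] (G : SimpleGraph V)
    (M N : Finset (Sym2 V)) (hM : IsMatchingSet G ↑M) (hN : IsMatchingSet G ↑N)
    (hcard : M.card < N.card) :
    ∃ P : Fin (N.card - M.card) → Σ (u : V) (v : V), G.Walk u v,
      (∀ i, IsAugPath G ↑M (P i).2.2) ∧
      (∀ i, ∀ e ∈ (P i).2.2.edges, e ∈ symmDiff M N) ∧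
      (∀ i j, i ≠ j → ∀ x ∈ (P i).2.2.support, x ∉ (P j).2.2.support) :=
  symmDiff_augmenting_paths_general G M N hM hN
end

section
/- Hopcroft–Karp length bound: let M be a matching in a graph G such that every M-augmenting path has length at least 2k - 1 (for some k ≥ 1), and let M* be a maximum matching. Then |M*| - |M| ≤ |V(G)| / (2k). Consequently, if shortest augmenting paths have length at least √n, the matching is within √n of maximum. -/
open SimpleGraph

variable {V : Type*}

/-!
Pick a vertex `u` covered by `M*` but not by `M`, and a longest path from `u` whose edges lie
alternately in `M* \ M` and `M \ M*`. By maximality every edge of `M ∪ M*` at a vertex of this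
path lies on it; if the path has odd length it is `M`-augmenting, hence has at least `2k`
vertices. Deleting the path lowers `|M*| - |M|` by one (odd length) or not at all (even length),
and an augmenting path of what is left of `M` that avoids the deleted vertices is `M`-augmenting.
Induction on the vertex set then gives `(|M*| - |M|) * 2k ≤ n`.
-/

open Walk

def List.Alternates {α : Type*} (A B : Set α) : List α → Prop
  | [] => True
  | e :: l => e ∈ A ∧ e ∉ B ∧ Alternates B A l

namespace List

variable {α : Type*} {A B : Set α}

@[simp] lemma alternates_nil : ([] : List α).Alternates A B := trivial

@[simp] lemma alternates_cons {e : α} {l : List α} :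
    (e :: l).Alternates A B ↔ e ∈ A ∧ e ∉ B ∧ l.Alternates B A := Iff.rfl

lemma alternates_append_singleton {l : List α} {e : α} :
    (l ++ [e]).Alternates A B ↔
      l.Alternates A B ∧ if Even l.length then e ∈ A ∧ e ∉ B else e ∈ B ∧ e ∉ A := by
  induction l generalizing A B with
  | nil => simp
  | cons f l ih =>
    by_cases hl : Even l.length <;> simp [ih, hl, Nat.even_add_one, and_assoc]

lemma Alternates.mem_union {l : List α} (h : l.Alternates A B) {e : α} (he : e ∈ l) :
    e ∈ A ∪ B := by
  induction l generalizing A B with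
  | nil => simp at he
  | cons f l ih =>
    rcases mem_cons.mp he with rfl | he
    · exact Or.inl h.1
    · exact Set.union_comm B A ▸ ih h.2.2 he

lemma Alternates.mem_iff {l : List α} (h : l.Alternates A B) (i : ℕ) (hi : i < l.length) :
    (l[i] ∈ A ↔ Even i) ∧ (l[i] ∈ B ↔ Odd i) := by
  induction l generalizing A B i with
  | nil => simp at hi
  | cons f l ih =>
    cases i with
    | zero => simp [h.1, h.2.1]
    | succ i =>
      have := ih h.2.2 i (by simpa using hi)
      simp [Nat.even_add_one, Nat.odd_add_one, this]

lemma Alternates.card_inter [DecidableEq α] {s t : Finset α} {l : List α} (hl : l.Nodup)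
    (h : l.Alternates ↑s ↑t) :
    (s ∩ l.toFinset).card = (l.length + 1) / 2 ∧ (t ∩ l.toFinset).card = l.length / 2 := by
  induction l generalizing s t with
  | nil => simp
  | cons e l ih =>
    obtain ⟨hes, het, hl'⟩ := h
    rw [nodup_cons] at hl
    have ih := ih hl.2 hl'
    rw [toFinset_cons, Finset.inter_insert_of_mem hes, Finset.inter_insert_of_notMem het,
      Finset.card_insert_of_notMem (by simp [hl.1]), ih.2, ih.1, length_cons]
    omega

end List

variable {G : SimpleGraph V}

lemma SimpleGraph.Walk.mem_of_mem_support {S : Set V} {u v : V} {p : G.Walk u v} (hu : u ∈ S)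
    (h : ∀ e ∈ p.edges, ∀ x ∈ e, x ∈ S) {x : V} (hx : x ∈ p.support) : x ∈ S := by
  induction p with
  | nil => simp_all
  | @cons u w v huw q ih =>
    rcases List.mem_cons.mp (support_cons huw q ▸ hx) with rfl | hx
    · exact hu
    · exact ih (h s(u, w) (by simp) w (Sym2.mem_mk_right _ _))
        (fun e he => h e (by simp [he])) hx

lemma IsMatchingSet.mono_s10 {M N : Set (Sym2 V)} (hM : IsMatchingSet G M) (h : N ⊆ M) :
    IsMatchingSet G N :=
  ⟨h.trans hM.1, fun v => (hM.2 v).anti fun _ he => ⟨h he.1, he.2⟩⟩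

lemma IsMatchingSet.card_biUnion_toFinset_s10 [DecidableEq V] {M : Finset (Sym2 V)}
    (hM : IsMatchingSet G ↑M) : (M.biUnion Sym2.toFinset).card = 2 * M.card := by
  rw [Finset.card_biUnion, Finset.sum_const_nat, mul_comm]
  · intro e he
    exact Sym2.card_toFinset_of_not_isDiag e (G.not_isDiag_of_mem_edgeSet (hM.1 he))
  · intro e he f hf hef
    refine Finset.disjoint_left.mpr fun x hxe hxf => hef (hM.2 x ?_ ?_)
    · exact ⟨he, Sym2.mem_toFinset.mp hxe⟩
    · exact ⟨hf, Sym2.mem_toFinset.mp hxf⟩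

lemma exists_unmatched_of_card_lt [DecidableEq V] {M M' : Finset (Sym2 V)}
    (hM : IsMatchingSet G ↑M) (hM' : IsMatchingSet G ↑M') (hlt : M.card < M'.card) :
    ∃ u, Unmatched ↑M u ∧ ∃ e ∈ M', u ∈ e := by
  by_contra! h
  have hsub : M'.biUnion Sym2.toFinset ⊆ M.biUnion Sym2.toFinset := by
    intro x hx
    obtain ⟨e', he', hxe'⟩ := Finset.mem_biUnion.mp hx
    obtain ⟨e, he, hxe⟩ : ∃ e ∈ (M : Set (Sym2 V)), x ∈ e := by
      by_contra! hx
      exact h x hx e' he' (Sym2.mem_toFinset.mp hxe')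
    exact Finset.mem_biUnion.mpr ⟨e, he, Sym2.mem_toFinset.mpr hxe⟩
  have := Finset.card_le_card hsub
  rw [hM.card_biUnion_toFinset_s10, hM'.card_biUnion_toFinset_s10] at this
  omega

lemma IsAugPath.of_sdiff_s10 {M D : Set (Sym2 V)} {u v : V} {p : G.Walk u v}
    (hp : IsAugPath G (M \ D) p) (hD : ∀ e ∈ D, ∀ x ∈ e, x ∉ p.support) : IsAugPath G M p := by
  obtain ⟨hpath, hodd, halt, hu, hv⟩ := hp
  have hsdiff : ∀ e ∈ M, ∀ x ∈ e, x ∈ p.support → e ∈ M \ D := fun e he x hxe hx =>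
    ⟨he, fun heD => hD e heD x hxe hx⟩
  refine ⟨hpath, hodd, fun i hi => ?_,
    fun e he hue => hu e (hsdiff e he u hue p.start_mem_support) hue,
    fun e he hve => hv e (hsdiff e he v hve p.end_mem_support) hve⟩
  have hD : p.edges.get ⟨i, hi⟩ ∉ D := fun heD => hD _ heD _ (Sym2.out_fst_mem _)
    (mem_support_of_mem_edges (List.get_mem _ _) (Sym2.out_fst_mem _))
  simpa only [Set.mem_sdiff, hD, not_false_eq_true, and_true] using halt i hi

namespace List.Alternates

variable {A B : Set (Sym2 V)} {u v : V}

lemma exists_mem_edges {p : G.Walk u v} (h : p.edges.Alternates A B) {x : V}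
    (hx : x ∈ p.support) (hxv : x ≠ v) :
    (∃ e ∈ p.edges, e ∈ A ∧ x ∈ e) ∧ (x ≠ u → ∃ e ∈ p.edges, e ∈ B ∧ x ∈ e) := by
  induction p generalizing A B with
  | nil => simp_all
  | @cons u w v huw q ih =>
    obtain ⟨hA, -, hq⟩ := h
    rcases mem_cons.mp (support_cons huw q ▸ hx) with rfl | hx
    · exact ⟨⟨s(x, w), by simp, hA, Sym2.mem_mk_left _ _⟩, fun h => absurd rfl h⟩
    obtain ⟨⟨e, he, heB, hxe⟩, hA'⟩ := ih hq hx hxv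
    refine ⟨?_, fun _ => ⟨e, by simp [he], heB, hxe⟩⟩
    by_cases hxw : x = w
    · exact ⟨s(u, w), by simp, hA, hxw ▸ Sym2.mem_mk_right _ _⟩
    · obtain ⟨f, hf, hfA, hxf⟩ := hA' hxw
      exact ⟨f, by simp [hf], hfA, hxf⟩

lemma mem_edges_of_ne_end {p : G.Walk u v} (h : p.edges.Alternates A B)
    (hA : IsMatchingSet G A) (hB : IsMatchingSet G B) (hu : Unmatched B u) {x : V}
    (hx : x ∈ p.support) (hxv : x ≠ v) {e : Sym2 V} (he : e ∈ A ∪ B) (hxe : x ∈ e) :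
    e ∈ p.edges := by
  rcases he with heA | heB
  · obtain ⟨f, hf, hfA, hxf⟩ := (h.exists_mem_edges hx hxv).1
    exact hA.2 x ⟨heA, hxe⟩ ⟨hfA, hxf⟩ ▸ hf
  · have hxu : x ≠ u := by rintro rfl; exact hu e heB hxe
    obtain ⟨f, hf, hfB, hxf⟩ := (h.exists_mem_edges hx hxv).2 hxu
    exact hB.2 x ⟨heB, hxe⟩ ⟨hfB, hxf⟩ ▸ hf

lemma mem_next_of_end_mem {p : G.Walk u v} (h : p.edges.Alternates A B)
    (hA : IsMatchingSet G A) (hB : IsMatchingSet G B) (hu : Unmatched B u) {e : Sym2 V}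
    (he : e ∈ A ∪ B) (hve : v ∈ e) (hep : e ∉ p.edges) :
    if Even p.length then e ∈ A ∧ e ∉ B else e ∈ B ∧ e ∉ A := by
  induction p using Walk.concatRec with
  | Hnil =>
    have heB : e ∉ B := fun heB => hu e heB hve
    simpa [heB] using he
  | @Hconcat u w v q hwv _ =>
    rw [Walk.edges_concat, concat_eq_append, alternates_append_singleton] at h
    simp only [Walk.length_concat, Nat.even_add_one, Walk.length_edges, ite_not] at h ⊢
    have hef : e ≠ s(w, v) := by rintro rfl; simp at hep
    split_ifs at h ⊢
    · have heA : e ∉ A := fun heA =>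
        hef (hA.2 v ⟨heA, hve⟩ ⟨h.2.1, Sym2.mem_mk_right _ _⟩)
      exact ⟨he.resolve_left heA, heA⟩
    · have heB : e ∉ B := fun heB =>
        hef (hB.2 v ⟨heB, hve⟩ ⟨h.2.1, Sym2.mem_mk_right _ _⟩)
      exact ⟨he.resolve_right heB, heB⟩

lemma exists_concat {p : G.Walk u v} (h : p.edges.Alternates A B) (hp : p.IsPath)
    (hA : IsMatchingSet G A) (hB : IsMatchingSet G B) (hu : Unmatched B u) {e : Sym2 V}
    (he : e ∈ A ∪ B) {x : V} (hxe : x ∈ e) (hx : x ∈ p.support) (hep : e ∉ p.edges) :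
    ∃ (w : V) (hvw : G.Adj v w),
      (p.concat hvw).IsPath ∧ (p.concat hvw).edges.Alternates A B := by
  obtain rfl : x = v := by
    by_contra hxv
    exact hep (h.mem_edges_of_ne_end hA hB hu hx hxv he hxe)
  obtain ⟨w, rfl⟩ := Sym2.mem_iff_exists.mp hxe
  have hvw : G.Adj x w := he.elim (fun he => hA.1 he) (fun he => hB.1 he)
  have hw : w ∉ p.support := fun hw =>
    hep (h.mem_edges_of_ne_end hA hB hu hw hvw.ne.symm he (Sym2.mem_mk_right _ _))
  refine ⟨w, hvw, hp.concat hw hvw, ?_⟩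
  rw [Walk.edges_concat, concat_eq_append, alternates_append_singleton, Walk.length_edges]
  exact ⟨h, h.mem_next_of_end_mem hA hB hu he (Sym2.mem_mk_left _ _) hep⟩

lemma notMem_of_odd {p : G.Walk u v} (h : p.edges.Alternates A B) (hp : p.IsPath)
    (hodd : Odd p.length) {e : Sym2 V} (he : e ∈ p.edges) (hve : v ∈ e) : e ∉ B := by
  induction p using Walk.concatRec with
  | Hnil => simp at hodd
  | @Hconcat u w v q hwv _ =>
    rw [Walk.edges_concat, concat_eq_append, alternates_append_singleton] at h
    rw [Walk.length_concat, Nat.odd_add_one, Nat.not_odd_iff_even] at hodd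
    rw [concat_isPath_iff] at hp
    rw [Walk.edges_concat, concat_eq_append, mem_append, mem_singleton] at he
    rcases he with he | rfl
    · exact absurd (mem_support_of_mem_edges he hve) hp.2
    · simp only [Walk.length_edges, hodd, if_true] at h
      exact h.2.2

lemma isAugPath {p : G.Walk u v} (h : p.edges.Alternates A B) (hp : p.IsPath)
    (hodd : Odd p.length) (hu : Unmatched B u) (hv : ∀ e ∈ B, v ∈ e → e ∈ p.edges) :
    IsAugPath G B p :=
  ⟨hp, hodd, fun i hi => by simpa using (h.mem_iff i hi).2, hu,
    fun e he hve => h.notMem_of_odd hp hodd (hv e he hve) hve he⟩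

end List.Alternates

lemma SimpleGraph.Walk.mem_sdiff_support_of_mem_sdiff_edges [DecidableEq V] {S : Finset V}
    {N : Finset (Sym2 V)} {u v : V} {p : G.Walk u v} (hNS : ∀ e ∈ N, ∀ x ∈ e, x ∈ S)
    (hN : ∀ e ∈ N, ∀ x ∈ e, x ∈ p.support → e ∈ p.edges) :
    ∀ e ∈ N \ p.edges.toFinset, ∀ x ∈ e, x ∈ S \ p.support.toFinset := by
  intro e he x hxe
  rw [Finset.mem_sdiff, List.mem_toFinset] at he ⊢
  exact ⟨hNS e he.1 x hxe, fun hx => he.2 (hN e he.1 x hxe hx)⟩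

theorem exists_isPath_alternates_closed [Fintype V] {A B : Set (Sym2 V)} {u : V}
    (hA : IsMatchingSet G A) (hB : IsMatchingSet G B) (hu : Unmatched B u) :
    ∃ (v : V) (p : G.Walk u v), p.IsPath ∧ p.edges.Alternates A B ∧
      ∀ e ∈ A ∪ B, ∀ x ∈ e, x ∈ p.support → e ∈ p.edges := by
  classical
  let P (n : ℕ) : Prop :=
    ∃ (v : V) (p : G.Walk u v), p.IsPath ∧ p.edges.Alternates A B ∧ p.length = n
  obtain ⟨v, p, hp, h, hlen⟩ : P (Nat.findGreatest P (Fintype.card V)) :=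
    Nat.findGreatest_spec (Nat.zero_le _) ⟨u, nil, by simp, by simp, rfl⟩
  refine ⟨v, p, hp, h, fun e he x hxe hx => by_contra fun hep => ?_⟩
  obtain ⟨w, hvw, hp', h'⟩ := h.exists_concat hp hA hB hu he hxe hx hep
  have := Nat.le_findGreatest (P := P) hp'.length_lt.le ⟨w, _, hp', h', rfl⟩
  rw [Walk.length_concat] at this
  omega

theorem card_sub_card_mul_le_card [Fintype V] [DecidableEq V] (ℓ : ℕ) (S : Finset V)
    (M M' : Finset (Sym2 V)) (hM : IsMatchingSet G ↑M) (hM' : IsMatchingSet G ↑M')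
    (hMS : ∀ e ∈ M, ∀ x ∈ e, x ∈ S) (hM'S : ∀ e ∈ M', ∀ x ∈ e, x ∈ S)
    (haug : ∀ (u v : V) (p : G.Walk u v), IsAugPath G ↑M p → (∀ x ∈ p.support, x ∈ S) →
      ℓ ≤ p.length + 1) :
    (M'.card - M.card) * ℓ ≤ S.card := by
  induction S using Finset.strongInduction generalizing M M' with
  | H S ih =>
  rcases le_or_gt M'.card M.card with hle | hlt
  · simp [Nat.sub_eq_zero_of_le hle]
  obtain ⟨u, hu, e₀, he₀, hue₀⟩ := exists_unmatched_of_card_lt hM hM' hlt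
  obtain ⟨v, p, hp, halt, hclosed⟩ := exists_isPath_alternates_closed hM' hM hu
  obtain ⟨hM'Ed, hMEd⟩ := halt.card_inter hp.isTrail.edges_nodup
  rw [length_edges] at hM'Ed hMEd
  have hpS : ∀ x ∈ p.support, x ∈ S := fun x =>
    mem_of_mem_support (S := ↑S) (hM'S e₀ he₀ u hue₀)
      fun e he => (halt.mem_union he).elim (hM'S e) (hMS e)
  have hMout := mem_sdiff_support_of_mem_sdiff_edges hMS fun e he => hclosed e (Or.inr he)
  have hM'out := mem_sdiff_support_of_mem_sdiff_edges hM'S fun e he => hclosed e (Or.inl he)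
  set Ed := p.edges.toFinset
  set Sup := p.support.toFinset
  have hSup : Sup ⊆ S := fun x hx => hpS x (List.mem_toFinset.mp hx)
  have hSup_card : Sup.card = p.length + 1 := by
    rw [List.toFinset_card_of_nodup hp.support_nodup, length_support]
  have key := ih (S \ Sup) (Finset.sdiff_ssubset hSup (by simp [Sup]))
    (M \ Ed) (M' \ Ed) (hM.mono_s10 (by simp)) (hM'.mono_s10 (by simp)) hMout hM'out
    fun u' v' q hq hqS => by
      refine haug u' v' q (IsAugPath.of_sdiff_s10 (D := Ed) (by simpa using hq) ?_) fun x hx => ?_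
      · intro e he x hxe hxq
        exact (Finset.mem_sdiff.mp (hqS x hxq)).2
          (List.mem_toFinset.mpr (mem_support_of_mem_edges (List.mem_toFinset.mp he) hxe))
      · exact (Finset.mem_sdiff.mp (hqS x hx)).1
  rw [Finset.card_sdiff_of_subset hSup] at key
  have hM_split := Finset.card_sdiff_add_card_inter M Ed
  have hM'_split := Finset.card_sdiff_add_card_inter M' Ed
  have hSup_le := Finset.card_le_card hSup
  rcases Nat.even_or_odd p.length with ⟨m, hm⟩ | hodd
  · calc (M'.card - M.card) * ℓ = ((M' \ Ed).card - (M \ Ed).card) * ℓ := by congr 1; omega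
      _ ≤ S.card := key.trans (Nat.sub_le _ _)
  · have hℓ := haug u v p (halt.isAugPath hp hodd hu fun e he hve =>
      hclosed e (Or.inr he) v hve p.end_mem_support) hpS
    obtain ⟨m, hm⟩ := hodd
    calc (M'.card - M.card) * ℓ = ((M' \ Ed).card - (M \ Ed).card) * ℓ + ℓ := by
          rw [← Nat.add_one_mul]; congr 1; omega
      _ ≤ S.card - Sup.card + Sup.card := add_le_add key (hℓ.trans hSup_card.ge)
      _ = S.card := Nat.sub_add_cancel hSup_le

theorem hopcroft_karp_bound_general [Fintype V] (G : SimpleGraph V)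
    (M Mstar : Finset (Sym2 V)) (hM : IsMatchingSet G ↑M)
    (hMstar : IsMatchingSet G ↑Mstar)
    (k : ℕ) (hk : 1 ≤ k)
    (haug : ∀ (u v : V) (p : G.Walk u v), IsAugPath G ↑M p → 2 * k - 1 ≤ p.length) :
    Mstar.card - M.card ≤ Fintype.card V / (2 * k) := by
  classical
  rw [Nat.le_div_iff_mul_le (by omega)]
  simpa using card_sub_card_mul_le_card (2 * k) Finset.univ M Mstar hM hMstar (by simp) (by simp)
    fun u v p hp _ => by have := haug u v p hp; omega

/-- Hopcroft–Karp length bound: if every `M`-augmenting path has length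
at least `2k - 1` (`k ≥ 1`) and `M*` is a maximum matching, then
`|M*| - |M| ≤ n / (2k)`. -/
theorem hopcroft_karp_bound [Fintype V] (G : SimpleGraph V)
    (M Mstar : Finset (Sym2 V)) (hM : IsMatchingSet G ↑M)
    (hMstar : IsMatchingSet G ↑Mstar)
    (hmax : ∀ N : Finset (Sym2 V), IsMatchingSet G ↑N → N.card ≤ Mstar.card)
    (k : ℕ) (hk : 1 ≤ k)
    (haug : ∀ (u v : V) (p : G.Walk u v), IsAugPath G ↑M p → 2 * k - 1 ≤ p.length) :
    Mstar.card - M.card ≤ Fintype.card V / (2 * k) :=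
  hopcroft_karp_bound_general G M Mstar hM hMstar k hk haug
end

section
/- Lcp value of a vertex made even by a bridge: let xy be a non-matching edge with both endpoints having even alternating distance, and let z be a vertex on the alternating tree path from y toward the blossom base with odd alternating distance Lcp_odd(z). If there is an even-length alternating path from a free vertex to x of length Lcp(x) and an odd-length alternating path from the free vertex through y to z whose suffix from z to y has length Lcp(y) - Lcp_odd(z), and these are suitably disjoint, then there is an even-length alternating path to z of length Lcp(x) + 1 + Lcp(y) - Lcp_odd(z); hence Lcp(z) ≤ Lcp(x) + 1 + Lcp(y) - Lcp_odd(z). -/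
open SimpleGraph

variable {V : Type*}

/-- Lcp value of a vertex made even by a bridge: with `P` a shortest even
alternating path from the free vertex `r` to `x`, `Q = Q₁ · Q₂` a shortest even
alternating path from `r` through `z` to `y` whose prefix `Q₁` to `z` has odd length
`LcpOdd z`, and `xy` a non-matching bridge such that `P · xy · reverse Q₂` is a simple
path, this combined walk is an even-length alternating path to `z` of length
`Lcp x + 1 + Lcp y - LcpOdd z`; hence `Lcp z ≤ Lcp x + 1 + Lcp y - LcpOdd z`. -/
theorem bridge_lcp (G : SimpleGraph V) (M : Set (Sym2 V)) (hM : IsMatchingSet G M)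
    (r x y z : V) (hr : Unmatched M r)
    (P : G.Walk r x) (Q₁ : G.Walk r z) (Q₂ : G.Walk z y)
    (hP : P.IsPath) (haltP : IsAlternating G M P) (hevP : Even P.length)
    (hPlen : (P.length : ℕ∞) = Lcp G M x)
    (hQ : (Q₁.append Q₂).IsPath) (haltQ : IsAlternating G M (Q₁.append Q₂))
    (hevQ : Even (Q₁.append Q₂).length)
    (hQlen : ((Q₁.append Q₂).length : ℕ∞) = Lcp G M y)
    (hQ₁odd : Odd Q₁.length) (hQ₁len : (Q₁.length : ℕ∞) = LcpOdd G M z)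
    (hxy : G.Adj x y) (hnm : s(x, y) ∉ M)
    (hpath : (P.append (SimpleGraph.Walk.cons hxy Q₂.reverse)).IsPath) :
    IsAlternating G M (P.append (SimpleGraph.Walk.cons hxy Q₂.reverse)) ∧
    Even (P.append (SimpleGraph.Walk.cons hxy Q₂.reverse)).length ∧
    ((P.append (SimpleGraph.Walk.cons hxy Q₂.reverse)).length : ℕ∞) =
      Lcp G M x + 1 + Lcp G M y - LcpOdd G M z ∧
    Lcp G M z ≤ Lcp G M x + 1 + Lcp G M y - LcpOdd G M z := by
  classical
  have hQ₁o : Q₁.length % 2 = 1 := Nat.odd_iff.mp hQ₁odd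
  have hPe : P.length % 2 = 0 := Nat.even_iff.mp hevP
  have hQapp : (Q₁.append Q₂).length = Q₁.length + Q₂.length :=
    SimpleGraph.Walk.length_append _ _
  have hQe : Q₁.length + Q₂.length % 2 * 2 ≥ 0 := by omega
  have hQe' : (Q₁.length + Q₂.length) % 2 = 0 := by
    rw [← hQapp]; exact Nat.even_iff.mp hevQ
  have hQ₂o : Q₂.length % 2 = 1 := by omega
  have hQ₂alt : ∀ (k : ℕ) (hk : k < Q₂.edges.length), (Q₂.edges[k] ∈ M ↔ k % 2 = 0) := by
    intro k hk
    have hke : Q₂.edges.length = Q₂.length := SimpleGraph.Walk.length_edges _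
    have hQeL : (Q₁.append Q₂).edges.length = Q₁.length + Q₂.length := by
      rw [SimpleGraph.Walk.length_edges, hQapp]
    have hlt : Q₁.length + k < (Q₁.append Q₂).edges.length := by omega
    have h := haltQ (Q₁.length + k) hlt
    rw [List.get_eq_getElem] at h
    have heq : (Q₁.append Q₂).edges[Q₁.length + k]'hlt = Q₂.edges[k] := by
      rw [List.getElem_of_eq (SimpleGraph.Walk.edges_append Q₁ Q₂) hlt,
        List.getElem_append_right (by rw [SimpleGraph.Walk.length_edges]; omega)]
      congr 1
      rw [SimpleGraph.Walk.length_edges]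
      omega
    rw [heq, Nat.odd_iff] at h
    rw [h]
    omega
  set W := P.append (SimpleGraph.Walk.cons hxy Q₂.reverse) with hW
  have hWlen : W.length = P.length + 1 + Q₂.length := by
    rw [hW, SimpleGraph.Walk.length_append, SimpleGraph.Walk.length_cons,
      SimpleGraph.Walk.length_reverse]
    omega
  have hWedges : W.edges = P.edges ++ s(x, y) :: Q₂.edges.reverse := by
    rw [hW, SimpleGraph.Walk.edges_append, SimpleGraph.Walk.edges_cons,
      SimpleGraph.Walk.edges_reverse]
  have halt : IsAlternating G M W := by
    intro i hi
    rw [List.get_eq_getElem]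
    have hiL : i < P.length + 1 + Q₂.length := by
      have := hi
      rwa [SimpleGraph.Walk.length_edges, hWlen] at this
    rcases lt_trichotomy i P.length with hlt | heq | hgt
    · have heq1 : W.edges[i]'hi = P.edges[i]'(by rw [SimpleGraph.Walk.length_edges]; omega) := by
        rw [List.getElem_of_eq hWedges hi]
        exact List.getElem_append_left (by rw [SimpleGraph.Walk.length_edges]; omega)
      rw [heq1]
      have h := haltP i (by rw [SimpleGraph.Walk.length_edges]; omega)
      rw [List.get_eq_getElem] at h
      exact h
    · have heq2 : W.edges[i]'hi = s(x, y) := by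
        rw [List.getElem_of_eq hWedges hi,
          List.getElem_append_right (by rw [SimpleGraph.Walk.length_edges]; omega)]
        have h0 : i - P.edges.length = 0 := by rw [SimpleGraph.Walk.length_edges]; omega
        simp only [h0, List.getElem_cons_zero]
      rw [heq2]
      constructor
      · intro h; exact absurd h hnm
      · intro h
        exfalso
        have := Nat.odd_iff.mp h
        omega
    · have hjlt : i - P.length - 1 < Q₂.length := by omega
      have heq3 : W.edges[i]'hi =
          Q₂.edges[Q₂.length - 1 - (i - P.length - 1)]'(by
            rw [SimpleGraph.Walk.length_edges]; omega) := by
        rw [List.getElem_of_eq hWedges hi,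
          List.getElem_append_right (by rw [SimpleGraph.Walk.length_edges]; omega)]
        have hidx : i - P.edges.length = (i - P.length - 1) + 1 := by
          rw [SimpleGraph.Walk.length_edges]; omega
        simp only [hidx, List.getElem_cons_succ]
        rw [List.getElem_reverse]
        congr 1
        rw [SimpleGraph.Walk.length_edges]
      rw [heq3, hQ₂alt _ _, Nat.odd_iff]
      omega
  have hev : Even W.length := by
    refine Nat.even_iff.mpr ?_
    rw [hWlen]
    omega
  have hlenEq : (W.length : ℕ∞) = Lcp G M x + 1 + Lcp G M y - LcpOdd G M z := by
    rw [← hPlen, ← hQlen, ← hQ₁len]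
    rw [show ((1 : ℕ∞)) = ((1 : ℕ) : ℕ∞) from rfl, ← Nat.cast_add, ← Nat.cast_add,
      ← ENat.coe_sub, Nat.cast_inj]
    rw [hWlen, hQapp]
    omega
  refine ⟨halt, hev, hlenEq, ?_⟩
  rw [← hlenEq]
  exact sInf_le ⟨r, W, hr, hpath, halt, hev, rfl⟩
end

section
/- O(√n) iterations suffice: consider any process that, starting from the empty matching in a graph on n vertices, in each iteration augments a maximal set of vertex-disjoint shortest augmenting paths (so that the shortest augmenting path length strictly increases each iteration). Then after at most 2⌈√(n/2)⌉ + 2 iterations the matching is maximum. Formally: if after k iterations every augmenting path has length ≥ 2k - 1, and a matching admitting no augmenting path shorter than 2k - 1 is within n/(2k) of maximum, then the total number of iterations needed to reach a maximum matching is O(√n). -/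
open SimpleGraph

variable {V : Type*}

/-!
Let `M` be a matching all of whose augmenting paths have at least `L` edges, and `N` any
matching. Take a vertex `v` that is `N`-covered but `M`-unmatched and a longest path in `M ∆ N`
ending at `v`. Its vertex set is closed under the edges of `M ∪ N`, so deleting the path leaves
two matchings on the remaining vertices; its edges alternate, so it has at most one more
`N`-edge than `M`-edge, and when it has one more it is `M`-augmenting and has at least `L + 1`
vertices. Iterating, `(|N| - |M|) (L + 1) ≤ n`.

After `k₀ = ⌈√(n/2)⌉ + 1` rounds every augmenting path has at least `2 k₀ - 1` edges, so at most
`n / (2 k₀) ≤ ⌈√(n/2)⌉` augmentations are missing, and each further round makes one of them.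
-/

namespace List

variable {α : Type*} {p : α → Bool} {l : List α}

theorem IsChain.getElem_eq_true_iff_odd (hl : l.IsChain (fun a b => p a ≠ p b))
    (hhead : ∀ a ∈ l.head?, p a = false) : ∀ (i : ℕ) (hi : i < l.length), p l[i] = true ↔ Odd i
  | 0, hi => by
    cases l with
    | nil => simp at hi
    | cons a l => simpa using hhead a rfl
  | i + 1, hi => by
    have hstep := List.isChain_iff_getElem.mp hl i hi
    rw [Nat.odd_add_one, ← hl.getElem_eq_true_iff_odd hhead i (by omega)]
    revert hstep
    cases p l[i] <;> cases p l[i + 1] <;> simp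

theorem IsChain.countP_not_le_countP :
    ∀ {l : List α}, l.IsChain (fun a b => p a ≠ p b) → (∀ a ∈ l.head?, p a) →
      l.countP (fun a => !p a) ≤ l.countP p
  | [], _, _ => by simp
  | [a], _, ha => by simp_all
  | a :: b :: l, hl, ha => by
    rw [isChain_cons_cons] at hl
    have hpa : p a := ha a rfl
    have hpb : p b = false := by simpa [hpa] using hl.1.symm
    have ih := IsChain.countP_not_le_countP (l := l) (List.isChain_cons.mp hl.2).2 fun c hc => by
      have := (List.isChain_cons.mp hl.2).1 c hc
      simpa [hpb] using this.symm
    simp [hpa, hpb]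
    omega

theorem IsChain.countP_not_le_countP_add_one (hl : l.IsChain (fun a b => p a ≠ p b)) :
    l.countP (fun a => !p a) ≤ l.countP p + 1 := by
  cases l with
  | nil => simp
  | cons a l =>
    cases hpa : p a
    · have ih := (List.isChain_cons.mp hl).2.countP_not_le_countP fun b hb => by
        simpa [hpa] using ((List.isChain_cons.mp hl).1 b hb).symm
      simp [hpa]
      omega
    · have := hl.countP_not_le_countP (by simpa using hpa)
      omega

end List

theorem Finset.card_inter_toFinset_of_nodup {α : Type*} [DecidableEq α] (s : Finset α)
    {l : List α} (hl : l.Nodup) : (s ∩ l.toFinset).card = l.countP (· ∈ s) := by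
  have : s ∩ l.toFinset = (l.filter (· ∈ s)).toFinset := by
    ext; simp [and_comm]
  rw [this, List.toFinset_card_of_nodup (hl.filter _), List.countP_eq_length_filter]

namespace IsMatchingSet

variable {G : SimpleGraph V}

theorem eq_of_mem {M : Set (Sym2 V)} (hM : IsMatchingSet G M) {e f : Sym2 V} {x : V}
    (he : e ∈ M) (hf : f ∈ M) (hxe : x ∈ e) (hxf : x ∈ f) : e = f :=
  hM.2 x ⟨he, hxe⟩ ⟨hf, hxf⟩

theorem mono_s19 {M M' : Set (Sym2 V)} (hM : IsMatchingSet G M) (h : M' ⊆ M) :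
    IsMatchingSet G M' :=
  ⟨h.trans hM.1, fun x => (hM.2 x).anti fun _ he => ⟨h he.1, he.2⟩⟩

theorem card_biUnion_toFinset_s19 [DecidableEq V] {M : Finset (Sym2 V)} (hM : IsMatchingSet G ↑M) :
    (M.biUnion Sym2.toFinset).card = 2 * M.card := by
  rw [Finset.card_biUnion, Finset.sum_const_nat, mul_comm]
  · exact fun e he => Sym2.card_toFinset_of_not_isDiag e (G.not_isDiag_of_mem_edgeSet (hM.1 he))
  · intro e he f hf hef
    refine Finset.disjoint_left.mpr fun x hxe hxf => hef ?_
    exact hM.eq_of_mem he hf (Sym2.mem_toFinset.mp hxe) (Sym2.mem_toFinset.mp hxf)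

theorem exists_unmatched_of_card_lt [DecidableEq V] {M N : Finset (Sym2 V)}
    (hM : IsMatchingSet G ↑M) (hN : IsMatchingSet G ↑N) (h : M.card < N.card) :
    ∃ u, Unmatched (↑M : Set (Sym2 V)) u ∧ ∃ e ∈ N, u ∈ e := by
  have : ¬ N.biUnion Sym2.toFinset ⊆ M.biUnion Sym2.toFinset := fun hsub => by
    have := Finset.card_le_card hsub
    rw [hM.card_biUnion_toFinset_s19, hN.card_biUnion_toFinset_s19] at this
    omega
  obtain ⟨u, huN, huM⟩ := Finset.not_subset.mp this
  simp only [Finset.mem_biUnion, Sym2.mem_toFinset, not_exists, not_and] at huN huM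
  exact ⟨u, huM, huN⟩

theorem mem_iff_notMem_of_mem_symmDiff [DecidableEq V] {M N : Finset (Sym2 V)}
    (hM : IsMatchingSet G ↑M) (hN : IsMatchingSet G ↑N) {e f : Sym2 V} {x : V} (hef : e ≠ f)
    (he : e ∈ symmDiff M N) (hf : f ∈ symmDiff M N) (hxe : x ∈ e) (hxf : x ∈ f) :
    e ∈ M ↔ f ∉ M := by
  rw [Finset.mem_symmDiff] at he hf
  constructor
  · exact fun heM hfM => hef (hM.eq_of_mem heM hfM hxe hxf)
  · intro hfM
    by_contra heM
    exact hef (hN.eq_of_mem (he.resolve_left (by tauto)).1 (hf.resolve_left (by tauto)).1 hxe hxf)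

end IsMatchingSet

namespace SimpleGraph.Walk

variable {G : SimpleGraph V} {u v x : V}

theorem IsPath.exists_ne_mem_edges_of_mem_support {p : G.Walk u v} (hp : p.IsPath)
    (hx : x ∈ p.support) (hxu : x ≠ u) (hxv : x ≠ v) :
    ∃ e ∈ p.edges, ∃ f ∈ p.edges, e ≠ f ∧ x ∈ e ∧ x ∈ f := by
  induction p with
  | nil => simp_all
  | @cons a b c hab q ih =>
    have hxq : x ∈ q.support := by simpa [hxu] using hx
    by_cases hxb : x = b
    · subst hxb
      cases q with
      | nil => exact absurd rfl hxv
      | @cons _ d _ _ _ =>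
        have hne := (List.nodup_cons.mp (edges_nodup_of_support_nodup hp.support_nodup)).1
        exact ⟨s(a, x), by simp, s(x, d), by simp, fun h => hne (by simp [h]), by simp, by simp⟩
    · obtain ⟨e, he, f, hf, hef, hxe, hxf⟩ := ih ((cons_isPath_iff _ _).mp hp).1 hxq hxb hxv
      exact ⟨e, by simp [he], f, by simp [hf], hef, hxe, hxf⟩

theorem IsPath.mem_head?_edges_of_start_mem {p : G.Walk u v} (hp : p.IsPath) {e : Sym2 V}
    (he : e ∈ p.edges) (hue : u ∈ e) : e ∈ p.edges.head? := by
  cases p with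
  | nil => simp at he
  | cons hub q =>
    rw [edges_cons, List.mem_cons] at he
    rcases he with rfl | he
    · simp
    · exact absurd (q.mem_support_of_mem_edges he hue) ((cons_isPath_iff _ _).mp hp).2

variable [DecidableEq V] {M N : Finset (Sym2 V)}

def IsSymmDiffPath (M N : Finset (Sym2 V)) (p : G.Walk u v) : Prop :=
  p.IsPath ∧ ∀ e ∈ p.edges, e ∈ symmDiff M N

theorem IsSymmDiffPath.isChain_edges (hM : IsMatchingSet G ↑M) (hN : IsMatchingSet G ↑N)
    {p : G.Walk u v} (hp : p.IsSymmDiffPath M N) :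
    p.edges.IsChain (fun e f => decide (e ∈ M) ≠ decide (f ∈ M)) := by
  induction p with
  | nil => simp
  | @cons a b _ _ q ih =>
    obtain ⟨hpath, hD⟩ := hp
    rw [edges_cons, List.isChain_cons]
    refine ⟨?_, ih ⟨((cons_isPath_iff _ _).mp hpath).1, fun e he => hD e (by simp [he])⟩⟩
    cases q with
    | nil => simp
    | @cons _ d _ _ _ =>
      have hne : s(a, b) ≠ s(b, d) := fun h =>
        (List.nodup_cons.mp (edges_nodup_of_support_nodup hpath.support_nodup)).1 (by simp [h])
      have := hM.mem_iff_notMem_of_mem_symmDiff hN hne (hD _ (by simp)) (hD _ (by simp))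
        (Sym2.mem_mk_right a b) (Sym2.mem_mk_left b d)
      simp only [edges_cons, List.head?_cons, Option.mem_def, Option.some.injEq, forall_eq']
      by_cases h : s(a, b) ∈ M <;> simp_all

theorem IsSymmDiffPath.mem_edges_of_ne_start (hM : IsMatchingSet G ↑M) (hN : IsMatchingSet G ↑N)
    {p : G.Walk u v} (hp : p.IsSymmDiffPath M N) (hv : Unmatched (↑M : Set (Sym2 V)) v)
    (hx : x ∈ p.support) (hxu : x ≠ u) {e : Sym2 V} (he : e ∈ symmDiff M N) (hxe : x ∈ e) :
    e ∈ p.edges := by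
  by_contra heP
  have side : ∀ f ∈ p.edges, x ∈ f → (e ∈ M ↔ f ∉ M) := fun f hf hxf =>
    hM.mem_iff_notMem_of_mem_symmDiff hN (fun h => heP (h ▸ hf)) he (hp.2 f hf) hxe hxf
  by_cases hxv : x = v
  · subst hxv
    obtain ⟨f, hf, hxf⟩ : ∃ f ∈ p.edges, x ∈ f := by
      simpa [hxu] using (p.reverse.mem_support_iff_exists_mem_edges (w := x)).mp (by simp [hx])
    have := side f hf hxf
    exact (hv e · hxe) (this.mpr (hv f · hxf))
  · obtain ⟨f, hf, f', hf', hff', hxf, hxf'⟩ := hp.1.exists_ne_mem_edges_of_mem_support hx hxu hxv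
    have := hM.mem_iff_notMem_of_mem_symmDiff hN hff' (hp.2 f hf) (hp.2 f' hf') hxf hxf'
    have := side f hf hxf
    have := side f' hf' hxf'
    tauto

theorem exists_isSymmDiffPath_forall_length_le [Fintype V] (M N : Finset (Sym2 V)) (v : V) :
    ∃ (u : V) (p : G.Walk u v), p.IsSymmDiffPath M N ∧
      ∀ (u' : V) (q : G.Walk u' v), q.IsSymmDiffPath M N → q.length ≤ p.length := by
  classical
  let P (n : ℕ) : Prop := ∃ (u : V) (p : G.Walk u v), p.IsSymmDiffPath M N ∧ p.length = n
  have hP0 : P 0 := ⟨v, nil, ⟨IsPath.nil, by simp⟩, rfl⟩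
  obtain ⟨u, p, hp, hlen⟩ := Nat.findGreatest_spec (Nat.zero_le (Fintype.card V)) hP0
  exact ⟨u, p, hp, fun u' q hq =>
    hlen ▸ Nat.le_findGreatest hq.1.length_lt.le ⟨u', q, hq, rfl⟩⟩

theorem IsSymmDiffPath.mem_edges_of_forall_length_le (hM : IsMatchingSet G ↑M)
    (hN : IsMatchingSet G ↑N) {p : G.Walk u v} (hp : p.IsSymmDiffPath M N)
    (hv : Unmatched (↑M : Set (Sym2 V)) v)
    (hmax : ∀ (u' : V) (q : G.Walk u' v), q.IsSymmDiffPath M N → q.length ≤ p.length)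
    (hx : x ∈ p.support) {e : Sym2 V} (he : e ∈ M ∪ N) (hxe : x ∈ e) : e ∈ p.edges := by
  have hstart : ∀ e ∈ symmDiff M N, u ∈ e → e ∈ p.edges := by
    intro e he hue
    obtain ⟨z, rfl⟩ := Sym2.mem_iff_exists.mp hue
    by_contra heP
    have hadj : G.Adj u z := by
      rcases Finset.mem_symmDiff.mp he with h | h
      exacts [hM.1 h.1, hN.1 h.1]
    have hz : z ∉ p.support := fun hz =>
      heP (hp.mem_edges_of_ne_start hM hN hv hz hadj.ne.symm he (Sym2.mem_mk_right u z))
    have hq : (cons hadj.symm p).IsSymmDiffPath M N :=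
      ⟨(cons_isPath_iff _ _).mpr ⟨hp.1, hz⟩, by simpa [Sym2.eq_swap] using ⟨he, hp.2⟩⟩
    simpa using hmax z _ hq
  have hD : ∀ e ∈ symmDiff M N, x ∈ e → e ∈ p.edges := fun e he hxe => by
    by_cases hxu : x = u
    · exact hstart e he (hxu ▸ hxe)
    · exact hp.mem_edges_of_ne_start hM hN hv hx hxu he hxe
  by_cases heD : e ∈ symmDiff M N
  · exact hD e heD hxe
  have heMN : e ∈ M ∧ e ∈ N := by
    rw [Finset.mem_symmDiff] at heD
    rw [Finset.mem_union] at he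
    tauto
  have hxv : x ≠ v := by rintro rfl; exact hv e heMN.1 hxe
  obtain ⟨f, hf, hxf⟩ := (mem_support_iff_exists_mem_edges.mp hx).resolve_left hxv
  rcases Finset.mem_symmDiff.mp (hp.2 f hf) with hfM | hfN
  · exact hM.eq_of_mem heMN.1 hfM.1 hxe hxf ▸ hf
  · exact hN.eq_of_mem heMN.2 hfN.1 hxe hxf ▸ hf

theorem IsSymmDiffPath.countP_mem_right_eq {p : G.Walk u v} (hp : p.IsSymmDiffPath M N) :
    p.edges.countP (· ∈ N) = p.edges.countP (fun e => !decide (e ∈ M)) := by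
  refine List.countP_congr fun e he => ?_
  have := Finset.mem_symmDiff.mp (hp.2 e he)
  by_cases heM : e ∈ M <;> simp_all

theorem IsSymmDiffPath.countP_mem_right_le (hM : IsMatchingSet G ↑M)
    (hN : IsMatchingSet G ↑N) {p : G.Walk u v} (hp : p.IsSymmDiffPath M N) :
    p.edges.countP (· ∈ N) ≤ p.edges.countP (· ∈ M) + 1 :=
  hp.countP_mem_right_eq ▸ (hp.isChain_edges hM hN).countP_not_le_countP_add_one

theorem IsSymmDiffPath.isAugPath_of_countP_lt (hM : IsMatchingSet G ↑M)
    (hN : IsMatchingSet G ↑N) {p : G.Walk u v} (hp : p.IsSymmDiffPath M N)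
    (hv : Unmatched (↑M : Set (Sym2 V)) v)
    (hmax : ∀ (u' : V) (q : G.Walk u' v), q.IsSymmDiffPath M N → q.length ≤ p.length)
    (hlt : p.edges.countP (· ∈ M) < p.edges.countP (· ∈ N)) : IsAugPath G ↑M p := by
  have hchain := hp.isChain_edges hM hN
  rw [hp.countP_mem_right_eq] at hlt
  obtain ⟨f, hf⟩ : ∃ f, p.edges.head? = some f := by
    cases h : p.edges with
    | nil => simp [h] at hlt
    | cons f _ => exact ⟨f, rfl⟩
  have hfirst : f ∉ M := fun h =>
    (hchain.countP_not_le_countP (by simpa [hf] using h)).not_gt hlt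
  refine ⟨hp.1, ?_, fun i hi => ?_, fun e he hue => ?_, hv⟩
  · have := hchain.countP_not_le_countP_add_one
    have := List.length_eq_countP_add_countP (fun e => decide (e ∈ M)) (l := p.edges)
    rw [← length_edges]
    exact ⟨p.edges.countP (· ∈ M), by simp_all; omega⟩
  · simpa using hchain.getElem_eq_true_iff_odd (by simpa [hf] using hfirst) i hi
  · have heP := hp.mem_edges_of_forall_length_le hM hN hv hmax (start_mem_support _)
      (Finset.mem_union_left N he) hue
    have := hp.1.mem_head?_edges_of_start_mem heP hue
    rw [hf, Option.mem_some_iff] at this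
    exact hfirst (this ▸ he)

theorem IsSymmDiffPath.card_sub_card_mul_le_sdiff_edges (hM : IsMatchingSet G ↑M)
    (hN : IsMatchingSet G ↑N) {p : G.Walk u v} (hp : p.IsSymmDiffPath M N)
    (hv : Unmatched (↑M : Set (Sym2 V)) v)
    (hmax : ∀ (u' : V) (q : G.Walk u' v), q.IsSymmDiffPath M N → q.length ≤ p.length)
    {L : ℕ} (hL : IsAugPath G ↑M p → L ≤ p.length) :
    (N.card - M.card) * (L + 1) ≤
      ((N \ p.edges.toFinset).card - (M \ p.edges.toFinset).card) * (L + 1) + (p.length + 1) := by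
  have hnodup := edges_nodup_of_support_nodup hp.1.support_nodup
  have hMc := M.card_sdiff_add_card_inter p.edges.toFinset
  have hNc := N.card_sdiff_add_card_inter p.edges.toFinset
  rw [M.card_inter_toFinset_of_nodup hnodup] at hMc
  rw [N.card_inter_toFinset_of_nodup hnodup] at hNc
  have hle := hp.countP_mem_right_le hM hN
  by_cases hlt : p.edges.countP (· ∈ M) < p.edges.countP (· ∈ N)
  · have hlen := hL (hp.isAugPath_of_countP_lt hM hN hv hmax hlt)
    have : N.card - M.card ≤ (N \ p.edges.toFinset).card - (M \ p.edges.toFinset).card + 1 := by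
      omega
    nlinarith
  · have : N.card - M.card ≤ (N \ p.edges.toFinset).card - (M \ p.edges.toFinset).card := by
      omega
    nlinarith

end SimpleGraph.Walk

theorem IsAugPath.of_diff {G : SimpleGraph V} {M T : Set (Sym2 V)} {u v : V} {p : G.Walk u v}
    (hT : ∀ x ∈ p.support, ∀ e ∈ T, x ∉ e) (hp : IsAugPath G (M \ T) p) : IsAugPath G M p := by
  have key : ∀ e, ∀ x ∈ p.support, x ∈ e → (e ∈ M \ T ↔ e ∈ M) := fun e x hx hxe =>
    ⟨fun h => h.1, fun h => ⟨h, fun heT => hT x hx e heT hxe⟩⟩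
  obtain ⟨hpath, hodd, halt, hu, hv⟩ := hp
  refine ⟨hpath, hodd, fun i hi => ?_, fun e he hue => ?_, fun e he hve => ?_⟩
  · have hmem := List.get_mem p.edges ⟨i, hi⟩
    rw [← halt i hi, key _ _ (p.mem_support_of_mem_edges hmem (Sym2.out_fst_mem _))
      (Sym2.out_fst_mem _)]
  · exact hu e ((key e u p.start_mem_support hue).mpr he) hue
  · exact hv e ((key e v p.end_mem_support hve).mpr he) hve

namespace IsMatchingSet

variable {G : SimpleGraph V} [Fintype V]

/-- `S` holds the vertices of the paths deleted so far; augmenting paths have to avoid it. -/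
theorem card_sub_card_mul_add_card_le [DecidableEq V] (L : ℕ) {M N : Finset (Sym2 V)}
    {S : Finset V} (hM : IsMatchingSet G ↑M) (hN : IsMatchingSet G ↑N)
    (hS : ∀ e ∈ M ∪ N, ∀ x ∈ e, x ∉ S)
    (hL : ∀ (a b : V) (q : G.Walk a b), IsAugPath G ↑M q → (∀ x ∈ q.support, x ∉ S) →
      L ≤ q.length) :
    (N.card - M.card) * (L + 1) + S.card ≤ Fintype.card V := by
  induction N using Finset.strongInduction generalizing M S with
  | H N ih =>
  rcases le_or_gt N.card M.card with hle | hlt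
  · simpa [Nat.sub_eq_zero_of_le hle] using S.card_le_univ
  obtain ⟨v, hv, e₀, he₀, hve₀⟩ := hM.exists_unmatched_of_card_lt hN hlt
  obtain ⟨u, p, hp, hmax⟩ := SimpleGraph.Walk.exists_isSymmDiffPath_forall_length_le M N v
  have hclosed : ∀ x ∈ p.support, ∀ e ∈ M ∪ N, x ∈ e → e ∈ p.edges := fun x hx e he hxe =>
    hp.mem_edges_of_forall_length_le hM hN hv hmax hx he hxe
  have he₀p : e₀ ∈ p.edges :=
    hclosed v p.end_mem_support e₀ (Finset.mem_union_right M he₀) hve₀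
  have hpS : ∀ x ∈ p.support, x ∉ S := fun x hx => by
    obtain ⟨f, hf, hxf⟩ := (p.mem_support_iff_exists_mem_edges.mp hx).elim
      (fun h => ⟨e₀, he₀p, h ▸ hve₀⟩) id
    exact hS f (Finset.symmDiff_subset_union (hp.2 f hf)) x hxf
  have hgain := hp.card_sub_card_mul_le_sdiff_edges hM hN hv hmax (hL u v p · hpS)
  set P := p.edges.toFinset
  set W := p.support.toFinset
  have hW : (S ∪ W).card = S.card + (p.length + 1) := by
    rw [Finset.card_union_of_disjoint, List.toFinset_card_of_nodup hp.1.support_nodup,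
      SimpleGraph.Walk.length_support]
    exact Finset.disjoint_right.mpr fun x hx => hpS x (List.mem_toFinset.mp hx)
  have hNP : N \ P ⊂ N := (Finset.ssubset_iff_of_subset Finset.sdiff_subset).mpr
    ⟨e₀, he₀, fun h => (Finset.mem_sdiff.mp h).2 (List.mem_toFinset.mpr he₀p)⟩
  have hIH := ih (N \ P) hNP (M := M \ P) (S := S ∪ W)
    (hM.mono_s19 (Finset.coe_subset.mpr Finset.sdiff_subset))
    (hN.mono_s19 (Finset.coe_subset.mpr Finset.sdiff_subset)) ?_ ?_
  · omega
  · intro e he x hxe hx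
    rw [← Finset.union_sdiff_distrib, Finset.mem_sdiff] at he
    rcases Finset.mem_union.mp hx with hxS | hxW
    · exact hS e he.1 x hxe hxS
    · exact he.2 (List.mem_toFinset.mpr (hclosed x (List.mem_toFinset.mp hxW) e he.1 hxe))
  · intro a b q hq hqSW
    have hqP : ∀ x ∈ q.support, ∀ e ∈ (↑P : Set (Sym2 V)), x ∉ e := fun x hx e he hxe =>
      hqSW x hx <| Finset.mem_union_right S <| List.mem_toFinset.mpr <|
        p.mem_support_of_mem_edges (List.mem_toFinset.mp he) hxe
    rw [Finset.coe_sdiff] at hq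
    exact hL a b q (hq.of_diff hqP) fun x hx hxS => hqSW x hx (Finset.mem_union_left W hxS)

theorem card_sub_card_mul_le {M N : Finset (Sym2 V)} (hM : IsMatchingSet G ↑M)
    (hN : IsMatchingSet G ↑N) {L : ℕ}
    (hL : ∀ (a b : V) (q : G.Walk a b), IsAugPath G ↑M q → L ≤ q.length) :
    (N.card - M.card) * (L + 1) ≤ Fintype.card V := by
  classical
  simpa using hM.card_sub_card_mul_add_card_le L hN (S := ∅) (by simp)
    fun a b q hq _ => hL a b q hq

end IsMatchingSet

theorem Nat.exists_le_add_eq_of_lt_imp_lt_succ {c : ℕ → ℕ} {m : ℕ} (hc : ∀ k, c k ≤ m)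
    (hstep : ∀ k, c k < m → c k < c (k + 1)) (k : ℕ) : ∃ j ≤ k + (m - c k), c j = m := by
  suffices ∀ d k, m - c k ≤ d → ∃ j ≤ k + d, c j = m from this _ k le_rfl
  intro d
  induction d with
  | zero => exact fun k hk => ⟨k, le_rfl, le_antisymm (hc k) (by omega)⟩
  | succ d ih =>
    intro k hk
    rcases (hc k).lt_or_eq with hlt | heq
    · obtain ⟨j, hj, hcj⟩ := ih (k + 1) (by have := hstep k hlt; omega)
      exact ⟨j, by omega, hcj⟩
    · exact ⟨k, by omega, heq⟩

theorem Nat.le_two_mul_ceil_sqrt_half_sq (n : ℕ) : n ≤ 2 * ⌈Real.sqrt ((n : ℝ) / 2)⌉₊ ^ 2 := by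
  have hs : Real.sqrt ((n : ℝ) / 2) ≤ ⌈Real.sqrt ((n : ℝ) / 2)⌉₊ := Nat.le_ceil _
  have hsq := Real.sq_sqrt (by positivity : (0 : ℝ) ≤ n / 2)
  have : (n : ℝ) ≤ 2 * (⌈Real.sqrt ((n : ℝ) / 2)⌉₊ : ℝ) ^ 2 := by
    nlinarith [Real.sqrt_nonneg ((n : ℝ) / 2)]
  exact_mod_cast this

theorem sqrt_iterations_suffice_general [Fintype V] (G : SimpleGraph V)
    (M : ℕ → Finset (Sym2 V)) (Mstar : Finset (Sym2 V))
    (hmatch : ∀ k, IsMatchingSet G ↑(M k)) (hMstar : IsMatchingSet G ↑Mstar)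
    (hmax : ∀ N : Finset (Sym2 V), IsMatchingSet G ↑N → N.card ≤ Mstar.card)
    (haug : ∀ k (u v : V) (p : G.Walk u v), IsAugPath G ↑(M k) p → 2 * k - 1 ≤ p.length)
    (hstep : ∀ k, (M k).card < Mstar.card → (M k).card < (M (k + 1)).card) :
    ∃ k ≤ 2 * ⌈Real.sqrt ((Fintype.card V : ℝ) / 2)⌉₊ + 2,
      (M k).card = Mstar.card := by
  set s := ⌈Real.sqrt ((Fintype.card V : ℝ) / 2)⌉₊
  have hn := Nat.le_two_mul_ceil_sqrt_half_sq (Fintype.card V)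
  have hdef := (hmatch (s + 1)).card_sub_card_mul_le hMstar (haug (s + 1))
  rw [Nat.sub_add_cancel (by omega)] at hdef
  have hgap : Mstar.card - (M (s + 1)).card ≤ s := by nlinarith
  obtain ⟨j, hj, hjm⟩ :=
    Nat.exists_le_add_eq_of_lt_imp_lt_succ (fun k => hmax _ (hmatch k)) hstep (s + 1)
  exact ⟨j, by omega, hjm⟩

/-- `O(√n)` iterations suffice: starting from the empty matching, if each
iteration augments a maximal set of vertex-disjoint shortest augmenting paths — so that
after `k` iterations every augmenting path w.r.t. the current matching `M k` has length
at least `2k - 1`, and the matching grows strictly as long as it is not maximum — then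
after at most `2⌈√(n/2)⌉ + 2` iterations the matching is maximum. -/
theorem sqrt_iterations_suffice [Fintype V] (G : SimpleGraph V)
    (M : ℕ → Finset (Sym2 V)) (Mstar : Finset (Sym2 V))
    (hmatch : ∀ k, IsMatchingSet G ↑(M k)) (hMstar : IsMatchingSet G ↑Mstar)
    (hmax : ∀ N : Finset (Sym2 V), IsMatchingSet G ↑N → N.card ≤ Mstar.card)
    (hzero : M 0 = ∅)
    (haug : ∀ k (u v : V) (p : G.Walk u v), IsAugPath G ↑(M k) p → 2 * k - 1 ≤ p.length)
    (hstep : ∀ k, (M k).card < Mstar.card → (M k).card < (M (k + 1)).card) :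
    ∃ k ≤ 2 * ⌈Real.sqrt ((Fintype.card V : ℝ) / 2)⌉₊ + 2,
      (M k).card = Mstar.card :=
  sqrt_iterations_suffice_general G M Mstar hmatch hMstar hmax haug hstep
end
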